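/- Let H ∈ (0, 1/2) and for p ∈ ℤ define ρ_H(p) = (1/2)·( |p+1|^{2H} + |p−1|^{2H} − 2|p|^{2H} ). Then the series Σ_{p∈ℤ} ρ_H(p)² converges, and there exists a constant C_H > 0, depending only on H, such that for every integer n ≥ 1: Σ_{|p| > n} ρ_H(p)² ≤ C_H · n^{4H−3}. -/

import Mathlib

open Real Finset

/-! For `|p| ≥ 2`, `2 ρ_H(p)` is a second difference of the concave function `x ↦ x ^ (2H)`.
Bernoulli's inequality, in the form of tangent-line bounds for `x ^ (2H)` and for the convex
`x ^ (2H - 1)`, bounds it by `(|p| - 1) ^ (2H - 2)`, which is at most `2 n ^ (2H - 1) / |p|` once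
`|p| > n`. Squaring and comparing with `∑_{|p| > n} p⁻² ≤ 4 / n` gives the tail bound
`16 n ^ (4H - 3)`; the case `n = 1` gives summability. -/

/-- Covariance of unit increments of fractional Brownian motion at lag `p`. -/
noncomputable def rhoH (H : ℝ) (p : ℤ) : ℝ :=
  (1 / 2) * ((|(p : ℝ) + 1|) ^ (2 * H) + (|(p : ℝ) - 1|) ^ (2 * H)
    - 2 * (|(p : ℝ)|) ^ (2 * H))

theorem one_add_mul_self_le_rpow_one_add_of_nonpos {s r : ℝ} (hs : -1 < s)
    (hr0 : -1 ≤ r) (hr1 : r ≤ 0) : 1 + r * s ≤ (1 + s) ^ r := by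
  have hpos : 0 < 1 + s := by linarith
  rcases le_or_gt (1 + r * s) 0 with h | h
  · exact h.trans (rpow_pos_of_pos hpos r).le
  -- Bernoulli for the exponent `-r ∈ [0, 1]`, then invert.
  have hneg : (1 + s) ^ (-r) ≤ 1 + -r * s :=
    rpow_one_add_le_one_add_mul_self hs.le (by linarith) (by linarith)
  have hinv : (1 + r * s) * (1 + s) ^ (-r) ≤ 1 := by
    nlinarith [mul_le_mul_of_nonneg_left hneg h.le, sq_nonneg (r * s)]
  rwa [rpow_neg hpos.le, ← div_eq_mul_inv, div_le_one (rpow_pos_of_pos hpos r)] at hinv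

theorem rpow_le_rpow_add_mul_sub {a x y : ℝ} (ha0 : 0 ≤ a) (ha1 : a ≤ 1) (hx : 0 ≤ x)
    (hy : 0 < y) : x ^ a ≤ y ^ a + a * y ^ (a - 1) * (x - y) := by
  have hs : -1 ≤ x / y - 1 := by linarith [div_nonneg hx hy.le]
  have h := rpow_one_add_le_one_add_mul_self hs ha0 ha1
  rw [add_sub_cancel, div_rpow hx hy.le, div_le_iff₀ (rpow_pos_of_pos hy a)] at h
  calc x ^ a ≤ (1 + a * (x / y - 1)) * y ^ a := h
    _ = y ^ a + a * y ^ (a - 1) * (x - y) := by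
      rw [rpow_sub_one hy.ne']; field_simp

theorem rpow_add_mul_sub_le_rpow {b x y : ℝ} (hb0 : -1 ≤ b) (hb1 : b ≤ 0) (hx : 0 < x)
    (hy : 0 < y) : y ^ b + b * y ^ (b - 1) * (x - y) ≤ x ^ b := by
  have hs : -1 < x / y - 1 := by linarith [div_pos hx hy]
  have h := one_add_mul_self_le_rpow_one_add_of_nonpos hs hb0 hb1
  rw [add_sub_cancel, div_rpow hx.le hy.le, le_div_iff₀ (rpow_pos_of_pos hy b)] at h
  calc y ^ b + b * y ^ (b - 1) * (x - y) = (1 + b * (x / y - 1)) * y ^ b := by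
        rw [rpow_sub_one hy.ne']; field_simp
    _ ≤ x ^ b := h

theorem abs_rpow_second_diff_le {a x : ℝ} (ha0 : 0 ≤ a) (ha1 : a ≤ 1) (hx : 1 < x) :
    |(x + 1) ^ a + (x - 1) ^ a - 2 * x ^ a| ≤ 2 * a * (1 - a) * (x - 1) ^ (a - 2) := by
  have hx0 : 0 < x := by linarith
  have hx1 : 0 < x - 1 := by linarith
  have hx2 : 0 < x + 1 := by linarith
  -- Tangents at `x` give the upper bound; tangents at `x ± 1`, together with convexity of
  -- `t ↦ t ^ (a - 1)` between `x - 1` and `x + 1`, give the lower bound.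
  have tangent_x_right := rpow_le_rpow_add_mul_sub ha0 ha1 hx2.le hx0
  have tangent_x_left := rpow_le_rpow_add_mul_sub ha0 ha1 hx1.le hx0
  have tangent_right_x := rpow_le_rpow_add_mul_sub ha0 ha1 hx0.le hx2
  have tangent_left_x := rpow_le_rpow_add_mul_sub ha0 ha1 hx0.le hx1
  have convex_tangent := rpow_add_mul_sub_le_rpow (b := a - 1) (by linarith) (by linarith) hx2 hx1
  rw [show a - 1 - 1 = a - 2 by ring] at convex_tangent
  have scaled_convex_tangent := mul_le_mul_of_nonneg_left convex_tangent ha0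
  rw [abs_le]
  constructor <;> nlinarith

theorem rhoH_neg (H : ℝ) (p : ℤ) : rhoH H (-p) = rhoH H p := by
  unfold rhoH
  push_cast
  rw [show -(p : ℝ) + 1 = -((p : ℝ) - 1) by ring, show -(p : ℝ) - 1 = -((p : ℝ) + 1) by ring,
    abs_neg, abs_neg, abs_neg]
  ring

theorem rhoH_abs (H : ℝ) (p : ℤ) : rhoH H |p| = rhoH H p := by
  rcases abs_choice p with h | h <;> simp only [h, rhoH_neg]

theorem abs_rhoH_le {H : ℝ} (hH0 : 0 ≤ H) (hH1 : H ≤ 1 / 2) {p : ℤ} (hp : 1 < |p|) :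
    |rhoH H p| ≤ (|(p : ℝ)| - 1) ^ (2 * H - 2) := by
  set x := |(p : ℝ)| with hx
  have hx1 : 1 < x := by rw [hx, ← Int.cast_abs]; exact_mod_cast hp
  have hρ : rhoH H p = (1 / 2) * ((x + 1) ^ (2 * H) + (x - 1) ^ (2 * H) - 2 * x ^ (2 * H)) := by
    rw [← rhoH_abs, rhoH, Int.cast_abs, ← hx, abs_of_pos (by linarith : 0 < x + 1),
      abs_of_pos (by linarith : 0 < x - 1), abs_of_pos (by linarith : 0 < x)]
  have hD := abs_rpow_second_diff_le (a := 2 * H) (by linarith) (by linarith) hx1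
  have hpow : 0 ≤ (x - 1) ^ (2 * H - 2) := rpow_nonneg (by linarith) _
  rw [hρ, abs_mul, abs_of_pos (by norm_num : (0 : ℝ) < 1 / 2)]
  nlinarith [mul_le_mul_of_nonneg_right (by nlinarith : 2 * H * (1 - 2 * H) ≤ 1) hpow]

theorem abs_rhoH_le_of_lt_abs {H : ℝ} (hH0 : 0 ≤ H) (hH1 : H ≤ 1 / 2) {n : ℕ} (hn : 1 ≤ n)
    {p : ℤ} (hp : (n : ℤ) < |p|) : |rhoH H p| ≤ 2 * (n : ℝ) ^ (2 * H - 1) / |(p : ℝ)| := by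
  have hnx : (n : ℝ) + 1 ≤ |(p : ℝ)| := by rw [← Int.cast_abs]; exact_mod_cast hp
  have hn1 : (1 : ℝ) ≤ n := by exact_mod_cast hn
  have hx1 : 0 < |(p : ℝ)| - 1 := by linarith
  calc |rhoH H p| ≤ (|(p : ℝ)| - 1) ^ (2 * H - 2) := abs_rhoH_le hH0 hH1 (by omega)
    _ = (|(p : ℝ)| - 1) ^ (2 * H - 1) * (|(p : ℝ)| - 1)⁻¹ := by
      rw [show 2 * H - 2 = (2 * H - 1) - 1 by ring, rpow_sub_one hx1.ne', div_eq_mul_inv]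
    _ ≤ (n : ℝ) ^ (2 * H - 1) * (2 / |(p : ℝ)|) := by
      gcongr ?_ * ?_
      · exact rpow_le_rpow_of_nonpos (by linarith) (by linarith) (by linarith)
      · rw [inv_le_iff_one_le_mul₀ hx1]
        rw [div_mul_eq_mul_div, le_div_iff₀ (by linarith)]
        linarith
    _ = 2 * (n : ℝ) ^ (2 * H - 1) / |(p : ℝ)| := by ring

theorem Finset.sum_le_two_mul_sum_image_natAbs {f : ℤ → ℝ} (hf : ∀ p, f (-p) = f p)
    (hf0 : ∀ p, 0 ≤ f p) (s : Finset ℤ) :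
    ∑ p ∈ s, f p ≤ 2 * ∑ m ∈ s.image Int.natAbs, f m := by
  have hfold : ∀ p, f p = f p.natAbs := fun p => by
    rcases Int.natAbs_eq p with h | h
    · rw [← h]
    · rw [h, hf, Int.natAbs_neg, Int.natAbs_natCast]
  rw [sum_congr rfl fun p _ => hfold p, sum_comp (fun m : ℕ => f m) Int.natAbs, mul_sum]
  gcongr with m
  have hfiber : #{p ∈ s | p.natAbs = m} ≤ 2 :=
    (card_le_card (t := {(m : ℤ), -(m : ℤ)}) fun p hp => by
      simp only [mem_filter] at hp
      simp only [mem_insert, mem_singleton]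
      omega).trans card_le_two
  rw [nsmul_eq_mul]
  exact mul_le_mul_of_nonneg_right (by exact_mod_cast hfiber) (hf0 m)

theorem Finset.sum_inv_sq_le_of_forall_lt {n : ℕ} (t : Finset ℕ) (ht : ∀ m ∈ t, n < m) :
    ∑ m ∈ t, ((m : ℝ) ^ 2)⁻¹ ≤ 2 / (n + 1) := by
  have hsub : t ⊆ Ioo n (t.sup id + 1) := fun m hm =>
    mem_Ioo.mpr ⟨ht m hm, Nat.lt_succ_of_le (le_sup (f := id) hm)⟩
  calc ∑ m ∈ t, ((m : ℝ) ^ 2)⁻¹ ≤ ∑ m ∈ Ioo n (t.sup id + 1), ((m : ℝ) ^ 2)⁻¹ :=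
        sum_le_sum_of_subset_of_nonneg hsub fun _ _ _ => by positivity
    _ ≤ 2 / (n + 1) := sum_Ioo_inv_sq_le _ _

theorem sum_rhoH_sq_le {H : ℝ} (hH0 : 0 ≤ H) (hH1 : H ≤ 1 / 2) {n : ℕ} (hn : 1 ≤ n)
    (s : Finset ℤ) (hs : ∀ p ∈ s, (n : ℤ) < |p|) :
    ∑ p ∈ s, rhoH H p ^ 2 ≤ 16 * (n : ℝ) ^ (4 * H - 3) := by
  have hn0 : (0 : ℝ) < n := by exact_mod_cast hn
  set c := (n : ℝ) ^ (2 * H - 1)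
  have hterm : ∀ p ∈ s, rhoH H p ^ 2 ≤ 4 * c ^ 2 * ((p : ℝ) ^ 2)⁻¹ := fun p hp => by
    have h := pow_le_pow_left₀ (abs_nonneg _) (abs_rhoH_le_of_lt_abs hH0 hH1 hn (hs p hp)) 2
    rw [sq_abs, div_pow, sq_abs, mul_pow, div_eq_mul_inv] at h
    linarith
  have himage : ∀ m ∈ s.image Int.natAbs, n < m := by
    simp only [mem_image, forall_exists_index, and_imp]
    rintro _ p hp rfl
    have := hs p hp
    rw [Int.abs_eq_natAbs] at this
    omega
  calc ∑ p ∈ s, rhoH H p ^ 2 ≤ ∑ p ∈ s, 4 * c ^ 2 * ((p : ℝ) ^ 2)⁻¹ := sum_le_sum hterm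
    _ = 4 * c ^ 2 * ∑ p ∈ s, ((p : ℝ) ^ 2)⁻¹ := (mul_sum _ _ _).symm
    _ ≤ 4 * c ^ 2 * (2 * ∑ m ∈ s.image Int.natAbs, ((m : ℝ) ^ 2)⁻¹) := by
      gcongr
      simpa only [Int.cast_natCast] using sum_le_two_mul_sum_image_natAbs
        (f := fun p : ℤ => ((p : ℝ) ^ 2)⁻¹) (fun p => by simp) (fun p => by positivity) s
    _ ≤ 4 * c ^ 2 * (2 * (2 / (n + 1))) := by
      gcongr
      exact sum_inv_sq_le_of_forall_lt _ himage
    _ ≤ 4 * c ^ 2 * (2 * (2 / n)) := by gcongr; linarith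
    _ = 16 * (n : ℝ) ^ (4 * H - 3) := by
      rw [← rpow_natCast, ← rpow_mul hn0.le,
        show 4 * H - 3 = (2 * H - 1) * (2 : ℕ) - 1 by push_cast; ring, rpow_sub_one hn0.ne']
      ring

theorem rhoH_sq_summable_and_tail_bound (H : ℝ) (hH : H ∈ Set.Ioo (0 : ℝ) (1 / 2)) :
    Summable (fun p : ℤ => rhoH H p ^ 2) ∧
    ∃ C : ℝ, 0 < C ∧ ∀ n : ℕ, 1 ≤ n →
      ∑' p : {p : ℤ // (n : ℤ) < |p|}, rhoH H (p : ℤ) ^ 2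
        ≤ C * (n : ℝ) ^ (4 * H - 3 : ℝ) := by
  obtain ⟨hH0, hH1⟩ := hH
  have hbound : ∀ n : ℕ, 1 ≤ n → ∀ u : Finset {p : ℤ // (n : ℤ) < |p|},
      ∑ p ∈ u, rhoH H (p : ℤ) ^ 2 ≤ 16 * (n : ℝ) ^ (4 * H - 3) := fun n hn u => by
    simpa [sum_map] using
      sum_rhoH_sq_le hH0.le hH1.le hn (u.map (Function.Embedding.subtype _))
        fun p hp => by obtain ⟨q, -, rfl⟩ := mem_map.mp hp; exact q.2
  have htail : ∀ n : ℕ, 1 ≤ n → Summable fun p : {p : ℤ // (n : ℤ) < |p|} => rhoH H p ^ 2 :=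
    fun n hn => summable_of_sum_le (fun _ => sq_nonneg _) (hbound n hn)
  refine ⟨?_, 16, by norm_num, fun n hn => (htail n hn).tsum_le_of_sum_le (hbound n hn)⟩
  have hsmall_finite : {p : ℤ | 1 < |p|}ᶜ.Finite :=
    (Set.finite_Icc (-1) 1).subset fun p hp => abs_le.mp (not_lt.mp hp)
  exact summable_subtype_and_compl.mp ⟨htail 1 le_rfl, hsmall_finite.summable fun p => rhoH H p ^ 2⟩
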